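/- Let f be a set of natural numbers, d > 0 a real constant, c > 0, and suppose there is a constant C₀ > 0 such that |π_f(x) − d·∫_2^x dt/ln t| ≤ C₀·x·exp(−c·√(ln x)) for all x ≥ 2. Then there is a constant C > 0 such that for all x ≥ 2: |∑_{p prime, p ≤ x, p ∈ f} ln p − d·x| ≤ C·x·ln x·exp(−c·√(ln x)). -/

import Mathlib

open Filter

/-- `primeCountIn f t` is the number of primes `p ≤ t` with `p ∈ f`. -/
noncomputable def primeCountIn (f : Set ℕ) (t : ℝ) : ℕ :=
  {p : ℕ | p.Prime ∧ p ∈ f ∧ (p : ℝ) ≤ t}.ncard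

open scoped Classical in
/-- `primeSumIn f g x` is the sum of `g p` over primes `p ≤ x` with `p ∈ f`. -/
noncomputable def primeSumIn (f : Set ℕ) (g : ℝ → ℝ) (x : ℝ) : ℝ :=
  ∑ p ∈ (Finset.range (⌊x⌋₊ + 1)).filter (fun p => p.Prime ∧ p ∈ f), g p

/-!
Partial summation gives `θ_f(x) = π_f(x) log x - ∫₂ˣ π_f(t) / t dt`, and
`Li(x) = ∫₂ˣ dt / log t` satisfies `∫₂ˣ Li(t) / t dt = Li(x) log x - x + 2`. Hence, with
`e = π_f - d Li`,
  `θ_f(x) - d x = e(x) log x - 2 d - ∫₂ˣ e(t) / t dt`.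
The first term is `O(x log x exp(-c √(log x)))` by hypothesis. For the integral, the derivative of
`2 t exp(-c √(log t))` dominates `exp(-c √(log t))` as soon as `log t ≥ c²`, so
`∫₂ˣ exp(-c √(log t)) dt ≤ O(1) + 2 x exp(-c √(log x))`. Finally `x log x exp(-c √(log x))` is
bounded below on `[2, ∞)`, so the constant terms are absorbed as well.
-/

open Real Finset MeasureTheory

noncomputable def primeIndicator (f : Set ℕ) : ℕ → ℝ :=
  ({p | p.Prime} ∩ f).indicator 1

lemma primeCountIn_eq_sum_primeIndicator (f : Set ℕ) (t : ℝ) :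
    (primeCountIn f t : ℝ) = ∑ k ∈ Icc 0 ⌊t⌋₊, primeIndicator f k := by
  classical
  have hset : {p : ℕ | p.Prime ∧ p ∈ f ∧ (p : ℝ) ≤ t} =
      ↑({p ∈ Icc 0 ⌊t⌋₊ | p ∈ {p | p.Prime} ∩ f}) := by
    ext p
    simp only [Set.mem_ofPred_eq, coe_filter, mem_Icc, Set.mem_inter_iff, zero_le, true_and]
    constructor
    · rintro ⟨hp, hpf, hpt⟩
      exact ⟨(Nat.le_floor_iff' hp.ne_zero).2 hpt, hp, hpf⟩
    · rintro ⟨hpt, hp, hpf⟩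
      exact ⟨hp, hpf, (Nat.le_floor_iff' hp.ne_zero).1 hpt⟩
  simp only [primeCountIn, hset, Set.ncard_coe_finset, primeIndicator, Set.indicator_apply,
    Pi.one_apply, sum_boole]

lemma primeSumIn_eq_sum_mul_primeIndicator (f : Set ℕ) (g : ℝ → ℝ) (x : ℝ) :
    primeSumIn f g x = ∑ k ∈ Icc 0 ⌊x⌋₊, g k * primeIndicator f k := by
  classical
  simp only [primeSumIn, ← Nat.range_succ_eq_Icc_zero, sum_filter, primeIndicator,
    Set.indicator_apply, Set.mem_inter_iff, Set.mem_ofPred_eq, Pi.one_apply, mul_ite, mul_one,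
    mul_zero]

lemma primeSumIn_log_eq (f : Set ℕ) {x : ℝ} (hx : 2 ≤ x) :
    primeSumIn f log x = log x * primeCountIn f x - ∫ t in (2 : ℝ)..x, primeCountIn f t / t := by
  have hdiff : ∀ t ∈ Set.Icc 2 x, DifferentiableAt ℝ log t := fun t ht =>
    differentiableAt_log (by linarith [ht.1])
  have hint : IntegrableOn (deriv log) (Set.Icc 2 x) := by
    rw [deriv_log']
    exact (continuousOn_inv₀.mono fun t ht => by simp; linarith [ht.1]).integrableOn_Icc
  rw [primeSumIn_eq_sum_mul_primeIndicator,
    sum_mul_eq_sub_integral_mul₁ _ (by simp [primeIndicator, Nat.not_prime_zero])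
      (by simp [primeIndicator, Nat.not_prime_one]) x hdiff hint,
    intervalIntegral.integral_of_le hx]
  simp only [deriv_log, ← primeCountIn_eq_sum_primeIndicator, inv_mul_eq_div]

lemma intervalIntegrable_primeCountIn_div (f : Set ℕ) {x : ℝ} (hx : 2 ≤ x) :
    IntervalIntegrable (fun t => (primeCountIn f t : ℝ) / t) volume 2 x := by
  have hinv : IntegrableOn (fun t : ℝ => t⁻¹) (Set.Icc 2 x) :=
    (continuousOn_inv₀.mono fun t ht => by simp; linarith [ht.1]).integrableOn_Icc
  rw [intervalIntegrable_iff_integrableOn_Icc_of_le hx]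
  simpa only [primeCountIn_eq_sum_primeIndicator, div_eq_inv_mul] using
    integrableOn_mul_sum_Icc (primeIndicator f) (m := 0) zero_le_two hinv

noncomputable def offsetLogIntegral (x : ℝ) : ℝ := ∫ t in (2 : ℝ)..x, 1 / log t

lemma continuousOn_one_div_log : ContinuousOn (fun t => 1 / log t) (Set.Ioi 1) :=
  continuousOn_const.div (continuousOn_log.mono fun _ ht => ne_of_gt (lt_trans one_pos ht))
    fun _ ht => (log_pos ht).ne'

lemma hasDerivAt_offsetLogIntegral {t : ℝ} (ht : 1 < t) :
    HasDerivAt offsetLogIntegral (1 / log t) t := by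
  have hsub : Set.uIcc 2 t ⊆ Set.Ioi 1 := fun s hs =>
    lt_of_lt_of_le (lt_min one_lt_two ht) hs.1
  exact intervalIntegral.integral_hasDerivAt_right
    (continuousOn_one_div_log.mono hsub).intervalIntegrable
    (continuousOn_one_div_log.stronglyMeasurableAtFilter isOpen_Ioi t ht)
    (continuousOn_one_div_log.continuousAt (isOpen_Ioi.mem_nhds ht))

lemma continuousOn_offsetLogIntegral_div :
    ContinuousOn (fun t => offsetLogIntegral t / t) (Set.Ioi 1) := fun _ ht =>
  ((hasDerivAt_offsetLogIntegral ht).continuousAt.div continuousAt_id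
    (one_pos.trans ht).ne').continuousWithinAt

lemma integral_offsetLogIntegral_div {x : ℝ} (hx : 1 < x) :
    ∫ t in (2 : ℝ)..x, offsetLogIntegral t / t = offsetLogIntegral x * log x - x + 2 := by
  have hsub : Set.uIcc 2 x ⊆ Set.Ioi 1 := fun s hs =>
    lt_of_lt_of_le (lt_min one_lt_two hx) hs.1
  have hderiv : ∀ t ∈ Set.uIcc 2 x,
      HasDerivAt (fun u => offsetLogIntegral u * log u - u) (offsetLogIntegral t / t) t := by
    intro t ht
    have ht1 : 1 < t := hsub ht
    refine (((hasDerivAt_offsetLogIntegral ht1).mul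
      (hasDerivAt_log (by linarith))).sub (hasDerivAt_id' t)).congr_deriv ?_
    rw [one_div_mul_cancel (log_pos ht1).ne', div_eq_mul_inv]
    ring
  have hzero : offsetLogIntegral 2 = 0 := intervalIntegral.integral_same
  rw [intervalIntegral.integral_eq_sub_of_hasDerivAt hderiv
    (continuousOn_offsetLogIntegral_div.mono hsub).intervalIntegrable, hzero]
  ring

lemma primeSumIn_log_sub_mul_eq (f : Set ℕ) (d : ℝ) {x : ℝ} (hx : 2 ≤ x) :
    primeSumIn f log x - d * x =
      log x * (primeCountIn f x - d * offsetLogIntegral x) - 2 * d -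
        ∫ t in (2 : ℝ)..x, (primeCountIn f t - d * offsetLogIntegral t) / t := by
  have hsub : Set.uIcc 2 x ⊆ Set.Ioi 1 := by
    rw [Set.uIcc_of_le hx]
    exact fun t ht => one_lt_two.trans_le ht.1
  simp_rw [sub_div, mul_div_assoc]
  rw [intervalIntegral.integral_sub (intervalIntegrable_primeCountIn_div f hx)
      ((continuousOn_offsetLogIntegral_div.mono hsub).intervalIntegrable.const_mul d),
    intervalIntegral.integral_const_mul, integral_offsetLogIntegral_div (by linarith),
    primeSumIn_log_eq f hx]
  ring

lemma continuousOn_exp_neg_mul_sqrt_log (c : ℝ) :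
    ContinuousOn (fun t => exp (-c * √(log t))) (Set.Ioi 0) := by
  fun_prop (disch := exact fun t ht => (Set.mem_Ioi.mp ht).ne')

lemma exp_neg_mul_sqrt_log_le_one {c : ℝ} (hc : 0 ≤ c) (t : ℝ) : exp (-c * √(log t)) ≤ 1 :=
  exp_le_one_iff.mpr (by nlinarith [sqrt_nonneg (log t)])

lemma exp_neg_sq_div_four_le_mul_exp_neg_mul_sqrt_log (c : ℝ) {x : ℝ} (hx : 1 ≤ x) :
    exp (-c ^ 2 / 4) ≤ x * exp (-c * √(log x)) := by
  have hsq : √(log x) ^ 2 = log x := sq_sqrt (log_nonneg hx)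
  rw [show x * exp (-c * √(log x)) = exp (log x + -c * √(log x)) by
    rw [exp_add, exp_log (by linarith)], exp_le_exp]
  nlinarith [sq_nonneg (√(log x) - c / 2)]

lemma hasDerivAt_mul_exp_neg_mul_sqrt_log (c : ℝ) {t : ℝ} (ht : 1 < t) :
    HasDerivAt (fun s => s * exp (-c * √(log s)))
      (exp (-c * √(log t)) * (1 - c / (2 * √(log t)))) t := by
  have hlog : 0 < log t := log_pos ht
  have hsqrt : HasDerivAt (fun s => √(log s)) (1 / (2 * √(log t)) * t⁻¹) t :=
    (hasDerivAt_sqrt hlog.ne').comp t (hasDerivAt_log (by linarith))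
  refine ((hasDerivAt_id' t).mul ((hsqrt.const_mul (-c)).exp)).congr_deriv ?_
  field_simp
  ring

lemma integral_exp_neg_mul_sqrt_log_le_of_exp_sq_le {c T x : ℝ} (hc : 0 < c)
    (hT : exp (c ^ 2) ≤ T) (hTx : T ≤ x) :
    ∫ t in T..x, exp (-c * √(log t)) ≤ 2 * x * exp (-c * √(log x)) := by
  have hT1 : 1 < T := (one_lt_exp_iff.mpr (by positivity)).trans_le hT
  have hderiv : ∀ t ∈ Set.Icc T x, HasDerivAt (fun s => 2 * (s * exp (-c * √(log s))))
      (2 * (exp (-c * √(log t)) * (1 - c / (2 * √(log t))))) t := fun t ht =>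
    (hasDerivAt_mul_exp_neg_mul_sqrt_log c (hT1.trans_le ht.1)).const_mul 2
  -- on `[T, x]` we have `c ≤ √(log t)`, so the derivative is at least `exp (-c * √(log t))`
  have hle : ∀ t ∈ Set.Ioo T x,
      exp (-c * √(log t)) ≤ 2 * (exp (-c * √(log t)) * (1 - c / (2 * √(log t)))) := by
    intro t ht
    have hc_le : c ≤ √(log t) :=
      (le_sqrt hc.le (log_nonneg (hT1.trans ht.1).le)).mpr
        ((le_log_iff_exp_le (by linarith [ht.1])).mpr (hT.trans ht.1.le))
    have hhalf : c / (2 * √(log t)) ≤ 1 / 2 := by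
      rw [div_le_iff₀ (by linarith)]
      linarith
    nlinarith [exp_pos (-c * √(log t))]
  have hmain := intervalIntegral.integral_le_sub_of_hasDeriv_right_of_le hTx
    (fun t ht => (hderiv t ht).continuousAt.continuousWithinAt)
    (fun t ht => (hderiv t (Set.Ioo_subset_Icc_self ht)).hasDerivWithinAt)
    ((continuousOn_exp_neg_mul_sqrt_log c).mono
      fun t ht => (one_pos.trans (hT1.trans_le ht.1))).integrableOn_Icc hle
  have hTnonneg : 0 ≤ 2 * (T * exp (-c * √(log T))) := by positivity
  linarith

lemma integral_exp_neg_mul_sqrt_log_le {c x : ℝ} (hc : 0 < c) (hx : 2 ≤ x) :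
    ∫ t in (2 : ℝ)..x, exp (-c * √(log t)) ≤
      max 2 (exp (c ^ 2)) + 2 * x * exp (-c * √(log x)) := by
  set T := max 2 (exp (c ^ 2))
  have hint : ∀ {a b : ℝ}, 2 ≤ a → a ≤ b →
      IntervalIntegrable (fun t => exp (-c * √(log t))) volume a b := fun ha hab =>
    ((continuousOn_exp_neg_mul_sqrt_log c).mono fun t ht => by
      rw [Set.uIcc_of_le hab] at ht
      exact zero_lt_two.trans_le (ha.trans ht.1)).intervalIntegrable
  have hle_length : ∀ {a b : ℝ}, 2 ≤ a → a ≤ b → ∫ t in a..b, exp (-c * √(log t)) ≤ b - a :=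
    fun ha hab => (intervalIntegral.integral_mono_on hab (hint ha hab) intervalIntegrable_const
      fun t _ => exp_neg_mul_sqrt_log_le_one hc.le t).trans_eq (by simp)
  have htail_nonneg : 0 ≤ 2 * x * exp (-c * √(log x)) := by positivity
  rcases le_total x T with hxT | hTx
  · linarith [hle_length le_rfl hx]
  · rw [← intervalIntegral.integral_add_adjacent_intervals (hint le_rfl (le_max_left _ _))
      (hint (le_max_left _ _) hTx)]
    linarith [hle_length le_rfl (le_max_left 2 (exp (c ^ 2))),
      integral_exp_neg_mul_sqrt_log_le_of_exp_sq_le hc (le_max_right _ _) hTx]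

lemma log_two_mul_exp_neg_sq_div_four_le (c : ℝ) {x : ℝ} (hx : 2 ≤ x) :
    log 2 * exp (-c ^ 2 / 4) ≤ x * log x * exp (-c * √(log x)) := by
  rw [mul_assoc, mul_left_comm]
  exact mul_le_mul (log_le_log two_pos hx)
    (exp_neg_sq_div_four_le_mul_exp_neg_mul_sqrt_log c (by linarith)) (exp_pos _).le
    (log_nonneg (by linarith))

lemma norm_integral_div_le_of_abs_le {e : ℝ → ℝ} {c C₀ x : ℝ} (hc : 0 < c) (hC₀ : 0 ≤ C₀)
    (he : ∀ t, 2 ≤ t → |e t| ≤ C₀ * t * exp (-c * √(log t))) (hx : 2 ≤ x) :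
    ‖∫ t in (2 : ℝ)..x, e t / t‖ ≤ C₀ * (max 2 (exp (c ^ 2)) + 2 * x * exp (-c * √(log x))) := by
  have hpointwise : ∀ t, 2 ≤ t → ‖e t / t‖ ≤ C₀ * exp (-c * √(log t)) := fun t ht => by
    rw [norm_div, Real.norm_eq_abs, Real.norm_of_nonneg (by linarith), div_le_iff₀ (by linarith)]
    linarith [he t ht]
  have hint : IntervalIntegrable (fun t => C₀ * exp (-c * √(log t))) volume 2 x :=
    ((continuousOn_exp_neg_mul_sqrt_log c).mono fun t ht => by
      rw [Set.uIcc_of_le hx] at ht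
      exact zero_lt_two.trans_le ht.1).intervalIntegrable.const_mul C₀
  calc _ ≤ ∫ t in (2 : ℝ)..x, C₀ * exp (-c * √(log t)) :=
        intervalIntegral.norm_integral_le_of_norm_le hx
          (ae_of_all _ fun t ht => hpointwise t ht.1.le) hint
    _ ≤ _ := by
        rw [intervalIntegral.integral_const_mul]
        exact mul_le_mul_of_nonneg_left (integral_exp_neg_mul_sqrt_log_le hc hx) hC₀

lemma abs_primeSumIn_log_sub_mul_le (f : Set ℕ) {d c C₀ x : ℝ} (hc : 0 < c) (hC₀ : 0 ≤ C₀)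
    (hpi : ∀ t, 2 ≤ t →
      |(primeCountIn f t : ℝ) - d * offsetLogIntegral t| ≤ C₀ * t * exp (-c * √(log t)))
    (hx : 2 ≤ x) :
    |primeSumIn f log x - d * x| ≤ C₀ * (x * log x * exp (-c * √(log x))) + 2 * |d| +
      C₀ * (max 2 (exp (c ^ 2)) + 2 * x * exp (-c * √(log x))) := by
  have hlog : 0 ≤ log x := log_nonneg (by linarith)
  have hmain : |log x * (primeCountIn f x - d * offsetLogIntegral x)| ≤
      C₀ * (x * log x * exp (-c * √(log x))) := by
    rw [abs_mul, abs_of_nonneg hlog]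
    nlinarith [mul_le_mul_of_nonneg_left (hpi x hx) hlog]
  rw [primeSumIn_log_sub_mul_eq f d hx, show 2 * |d| = |2 * d| by rw [abs_mul, abs_two]]
  have herr := norm_integral_div_le_of_abs_le hc hC₀ hpi hx
  rw [Real.norm_eq_abs] at herr
  calc _ ≤ |log x * (primeCountIn f x - d * offsetLogIntegral x) - 2 * d| +
        |∫ t in (2 : ℝ)..x, ((primeCountIn f t : ℝ) - d * offsetLogIntegral t) / t| := abs_sub _ _
    _ ≤ _ := by gcongr; exact (abs_sub _ _).trans (by gcongr)

theorem stmt8_general (f : Set ℕ) (d : ℝ) (c : ℝ) (hc : 0 < c)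
    (C₀ : ℝ) (hC₀ : 0 < C₀)
    (hpi : ∀ x : ℝ, 2 ≤ x →
      |(primeCountIn f x : ℝ) - d * ∫ t in (2 : ℝ)..x, 1 / Real.log t| ≤
        C₀ * x * Real.exp (-c * Real.sqrt (Real.log x))) :
    ∃ C : ℝ, 0 < C ∧ ∀ x : ℝ, 2 ≤ x →
      |primeSumIn f Real.log x - d * x| ≤
        C * x * Real.log x * Real.exp (-c * Real.sqrt (Real.log x)) := by
  set T := max 2 (exp (c ^ 2))
  set η := log 2 * exp (-c ^ 2 / 4)
  have hη : 0 < η := by positivity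
  refine ⟨C₀ + 2 * C₀ / log 2 + (2 * |d| + C₀ * T) / η, by positivity, fun x hx => ?_⟩
  set B := x * log x * exp (-c * √(log x))
  -- the lower-order terms `2 |d| + C₀ T` and `2 C₀ x exp (-c √(log x))` are absorbed into `B`
  have hηB : η ≤ B := log_two_mul_exp_neg_sq_div_four_le c hx
  have hxB : log 2 * (x * exp (-c * √(log x))) ≤ B := by
    rw [show B = log x * (x * exp (-c * √(log x))) by ring]
    gcongr
  calc _ ≤ C₀ * B + 2 * |d| + C₀ * (T + 2 * x * exp (-c * √(log x))) :=
        abs_primeSumIn_log_sub_mul_le f hc hC₀.le hpi hx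
    _ = C₀ * B + (2 * |d| + C₀ * T) / η * η +
          2 * C₀ / log 2 * (log 2 * (x * exp (-c * √(log x)))) := by
        field_simp
        ring
    _ ≤ C₀ * B + (2 * |d| + C₀ * T) / η * B + 2 * C₀ / log 2 * B := by gcongr
    _ = _ := by ring

theorem stmt8 (f : Set ℕ) (d : ℝ) (hd : 0 < d) (c : ℝ) (hc : 0 < c)
    (C₀ : ℝ) (hC₀ : 0 < C₀)
    (hpi : ∀ x : ℝ, 2 ≤ x →
      |(primeCountIn f x : ℝ) - d * ∫ t in (2 : ℝ)..x, 1 / Real.log t| ≤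
        C₀ * x * Real.exp (-c * Real.sqrt (Real.log x))) :
    ∃ C : ℝ, 0 < C ∧ ∀ x : ℝ, 2 ≤ x →
      |primeSumIn f Real.log x - d * x| ≤
        C * x * Real.log x * Real.exp (-c * Real.sqrt (Real.log x)) :=
  stmt8_general f d c hc C₀ hC₀ hpi
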